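/- arXiv:2312.13658 — 2 statements merged into one kernel-verified Lean document; each statement's English description precedes it below -/
import Mathlib

section
/- 𝒦-continuity of the transition map: Let the system be i-IOSS with functions β ∈ 𝒦ℒ, γ₁, γ₂ ∈ 𝒦, and let h be 𝒦-continuous with α_h ∈ 𝒦. Then f is 𝒦-continuous in the sense that there exists α_f ∈ 𝒦 such that for all x₁, x₂ ∈ ℝⁿ and w₁, w₂ ∈ ℝ^q: |f(x₁, w₁) − f(x₂, w₂)| ≤ α_f(|x₁ − x₂| + |w₁ − w₂|). -/
open Set Filter

noncomputable section

/-- `Vec m` is `ℝ^m` with the Euclidean norm. -/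
abbrev Vec (m : ℕ) := EuclideanSpace ℝ (Fin m)

/-- A function `φ : ℝ≥0 → ℝ≥0` is of class 𝒦 (modeled on `ℝ`, restricted to `[0,∞)`):
continuous, strictly increasing and `φ 0 = 0`. -/
def IsClassK (φ : ℝ → ℝ) : Prop :=
  ContinuousOn φ (Ici 0) ∧ StrictMonoOn φ (Ici 0) ∧ φ 0 = 0

/-- A function `σ : ℕ → ℝ≥0` is of class ℒ: non-increasing with limit `0`. -/
def IsClassL (σ : ℕ → ℝ) : Prop :=
  (∀ t, 0 ≤ σ t) ∧ Antitone σ ∧ Tendsto σ atTop (nhds 0)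

/-- Class 𝒦ℒ. -/
def IsClassKL (β : ℝ → ℕ → ℝ) : Prop :=
  (∀ t, IsClassK fun s => β s t) ∧ ∀ s, 0 ≤ s → IsClassL fun t => β s t

/-- Solution map of `x(t+1) = f(x(t), w(t))`, `x(0) = x₀`. -/
def sol {n q : ℕ} (f : Vec n → Vec q → Vec n) (x0 : Vec n) (w : ℕ → Vec q) : ℕ → Vec n
  | 0 => x0
  | t + 1 => f (sol f x0 w t) (w t)

/-- `|Δx(t)|`. -/
def nDx {n q : ℕ} (f : Vec n → Vec q → Vec n) (x01 x02 : Vec n) (w1 w2 : ℕ → Vec q)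
    (t : ℕ) : ℝ :=
  ‖sol f x01 w1 t - sol f x02 w2 t‖

/-- `|Δh(Δx(t))|`. -/
def nDy {n q p : ℕ} (f : Vec n → Vec q → Vec n) (h : Vec n → Vec p)
    (x01 x02 : Vec n) (w1 w2 : ℕ → Vec q) (t : ℕ) : ℝ :=
  ‖h (sol f x01 w1 t) - h (sol f x02 w2 t)‖

/-- `|Δw(t)|`. -/
def nDw {q : ℕ} (w1 w2 : ℕ → Vec q) (t : ℕ) : ℝ := ‖w1 t - w2 t‖

/-- `sup_{0 ≤ τ < t} g τ` (empty sup is `0` by the `Real.sSup` convention). -/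
def supLt (t : ℕ) (g : ℕ → ℝ) : ℝ := sSup (g '' {τ | τ < t})

/-- `sup_{τ ∈ S, τ < t} g τ`. -/
def supMem (S : Set ℕ) (t : ℕ) (g : ℕ → ℝ) : ℝ := sSup (g '' {τ | τ ∈ S ∧ τ < t})

/-- Time-discounted max over `0 ≤ τ < t` of `β (g τ) (t - τ - 1)`. -/
def dmaxLt (t : ℕ) (g : ℕ → ℝ) (β : ℝ → ℕ → ℝ) : ℝ :=
  sSup ((fun τ => β (g τ) (t - τ - 1)) '' {τ | τ < t})

/-- Time-discounted max over `τ ∈ S, τ < t` of `β (g τ) (t - τ - 1)`. -/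
def dmaxMem (S : Set ℕ) (t : ℕ) (g : ℕ → ℝ) (β : ℝ → ℕ → ℝ) : ℝ :=
  sSup ((fun τ => β (g τ) (t - τ - 1)) '' {τ | τ ∈ S ∧ τ < t})

/-- `t^i_j = δ_i + ⋯ + δ_{i+j-1}` (the sequence `δ` is 1-based; `δ 0` is unused). -/
def sampT (δ : ℕ → ℕ) (i j : ℕ) : ℕ := ∑ r ∈ Finset.range j, δ (i + r)

/-- The sampling set `K_i = {t^i_j : j ≥ 1}`. -/
def sampSet (δ : ℕ → ℕ) (i : ℕ) : Set ℕ := {m | ∃ j, 1 ≤ j ∧ m = sampT δ i j}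

/-- The i-IOSS bound with given comparison functions. -/
def iIOSSBound {n q p : ℕ} (f : Vec n → Vec q → Vec n) (h : Vec n → Vec p)
    (β : ℝ → ℕ → ℝ) (γ1 γ2 : ℝ → ℝ) : Prop :=
  ∀ x01 x02 w1 w2 t,
    nDx f x01 x02 w1 w2 t ≤
      max (β ‖x01 - x02‖ t)
        (max (γ1 (supLt t (nDw w1 w2))) (γ2 (supLt t (nDy f h x01 x02 w1 w2))))

/-- The sample-based i-IOSS bound w.r.t. the sampling set generated by `δ`. -/
def sampledIOSSBound {n q p : ℕ} (f : Vec n → Vec q → Vec n) (h : Vec n → Vec p)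
    (δ : ℕ → ℕ) (β : ℝ → ℕ → ℝ) (γ1 γ2 : ℝ → ℝ) : Prop :=
  ∀ i, 1 ≤ i → ∀ x01 x02 w1 w2 t,
    nDx f x01 x02 w1 w2 t ≤
      max (β ‖x01 - x02‖ t)
        (max (γ1 (supLt t (nDw w1 w2)))
             (γ2 (supMem (sampSet δ i) t (nDy f h x01 x02 w1 w2))))

/-- The sample-based i-IOSS bound on an input set `W`. -/
def sampledIOSSBoundOn {n q p : ℕ} (f : Vec n → Vec q → Vec n) (h : Vec n → Vec p)
    (W : Set (ℕ → Vec q)) (δ : ℕ → ℕ) (β : ℝ → ℕ → ℝ) (γ1 γ2 : ℝ → ℝ) : Prop :=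
  ∀ i, 1 ≤ i → ∀ x01 x02, ∀ w1 ∈ W, ∀ w2 ∈ W, ∀ t,
    nDx f x01 x02 w1 w2 t ≤
      max (β ‖x01 - x02‖ t)
        (max (γ1 (supLt t (nDw w1 w2)))
             (γ2 (supMem (sampSet δ i) t (nDy f h x01 x02 w1 w2))))

/-- The sample-based time-discounted i-IOSS bound. -/
def sampledTDBound {n q p : ℕ} (f : Vec n → Vec q → Vec n) (h : Vec n → Vec p)
    (δ : ℕ → ℕ) (βx βu βy : ℝ → ℕ → ℝ) : Prop :=
  ∀ i, 1 ≤ i → ∀ x01 x02 w1 w2 t,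
    nDx f x01 x02 w1 w2 t ≤
      max (βx ‖x01 - x02‖ t)
        (max (dmaxLt t (nDw w1 w2) βu)
             (dmaxMem (sampSet δ i) t (nDy f h x01 x02 w1 w2) βy))

/-- The sample-based time-discounted i-IOSS bound on an input set `W`. -/
def sampledTDBoundOn {n q p : ℕ} (f : Vec n → Vec q → Vec n) (h : Vec n → Vec p)
    (W : Set (ℕ → Vec q)) (δ : ℕ → ℕ) (βx βu βy : ℝ → ℕ → ℝ) : Prop :=
  ∀ i, 1 ≤ i → ∀ x01 x02, ∀ w1 ∈ W, ∀ w2 ∈ W, ∀ t,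
    nDx f x01 x02 w1 w2 t ≤
      max (βx ‖x01 - x02‖ t)
        (max (dmaxLt t (nDw w1 w2) βu)
             (dmaxMem (sampSet δ i) t (nDy f h x01 x02 w1 w2) βy))

/-- `(x₀₁, x₀₂, w₁, w₂)` generates a pair of i-ISS trajectories relative to `(β, γ1, σ1)`. -/
def pairISS {n q : ℕ} (f : Vec n → Vec q → Vec n) (β : ℝ → ℕ → ℝ) (γ1 : ℝ → ℝ)
    (σ1 : ℕ → ℝ) (x01 x02 : Vec n) (w1 w2 : ℕ → Vec q) : Prop :=
  ∀ t, nDx f x01 x02 w1 w2 t ≤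
    max (β ‖x01 - x02‖ t)
      (sSup ((fun τ => γ1 (nDw w1 w2 τ) * σ1 (t - τ - 1)) '' {τ | τ < t}))


/-! Evaluate the i-IOSS estimate at `t = 1` with constant inputs: then `Δx(1) = f(x₁, w₁) - f(x₂, w₂)`,
the suprema over `τ < 1` reduce to the values at `τ = 0`, and the output term is bounded through `α_h`.
So `α_f(s) = β(s, 1) + γ₁(s) + γ₂(α_h(s))` works. -/

namespace IsClassK

variable {φ ψ : ℝ → ℝ}

theorem monotoneOn (hφ : IsClassK φ) : MonotoneOn φ (Ici 0) :=
  hφ.2.1.monotoneOn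

theorem nonneg (hφ : IsClassK φ) {a : ℝ} (ha : 0 ≤ a) : 0 ≤ φ a :=
  hφ.2.2 ▸ hφ.monotoneOn self_mem_Ici ha ha

theorem mapsTo_Ici (hφ : IsClassK φ) : MapsTo φ (Ici 0) (Ici 0) :=
  fun _ ha => hφ.nonneg ha

theorem add (hφ : IsClassK φ) (hψ : IsClassK ψ) : IsClassK fun s => φ s + ψ s :=
  ⟨hφ.1.add hψ.1, hφ.2.1.add hψ.2.1, by simp [hφ.2.2, hψ.2.2]⟩

theorem comp (hφ : IsClassK φ) (hψ : IsClassK ψ) : IsClassK fun s => φ (ψ s) :=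
  ⟨hφ.1.comp hψ.1 hψ.mapsTo_Ici, hφ.2.1.comp hψ.2.1 hψ.mapsTo_Ici, by simp [hψ.2.2, hφ.2.2]⟩

end IsClassK

theorem supLt_one (g : ℕ → ℝ) : supLt 1 g = g 0 := by
  simp [supLt]

theorem iIOSSBound.norm_sub_le {n q p : ℕ} {f : Vec n → Vec q → Vec n} {h : Vec n → Vec p}
    {β : ℝ → ℕ → ℝ} {γ1 γ2 : ℝ → ℝ} (hiIOSS : iIOSSBound f h β γ1 γ2)
    (x1 x2 : Vec n) (w1 w2 : Vec q) :
    ‖f x1 w1 - f x2 w2‖ ≤ max (β ‖x1 - x2‖ 1) (max (γ1 ‖w1 - w2‖) (γ2 ‖h x1 - h x2‖)) := by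
  simpa [nDx, nDw, nDy, supLt_one, sol] using hiIOSS x1 x2 (fun _ => w1) (fun _ => w2) 1

/-- 𝒦-continuity of the transition map `f` for an i-IOSS system with 𝒦-continuous output. -/
theorem f_is_K_continuous {n q p : ℕ}
    (f : Vec n → Vec q → Vec n) (h : Vec n → Vec p)
    (β : ℝ → ℕ → ℝ) (γ1 γ2 : ℝ → ℝ)
    (hβ : IsClassKL β) (hγ1 : IsClassK γ1) (hγ2 : IsClassK γ2)
    (hiIOSS : iIOSSBound f h β γ1 γ2)
    (αh : ℝ → ℝ) (hαh : IsClassK αh)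
    (hKcont : ∀ x1 x2 : Vec n, ‖h x1 - h x2‖ ≤ αh ‖x1 - x2‖) :
    ∃ αf : ℝ → ℝ, IsClassK αf ∧
      ∀ (x1 x2 : Vec n) (w1 w2 : Vec q),
        ‖f x1 w1 - f x2 w2‖ ≤ αf (‖x1 - x2‖ + ‖w1 - w2‖) := by
  have hβ1 : IsClassK fun s => β s 1 := hβ.1 1
  refine ⟨fun s => β s 1 + γ1 s + γ2 (αh s), (hβ1.add hγ1).add (hγ2.comp hαh),
    fun x1 x2 w1 w2 => ?_⟩
  set s := ‖x1 - x2‖ + ‖w1 - w2‖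
  have hx : ‖x1 - x2‖ ∈ Ici 0 := norm_nonneg _
  have hw : ‖w1 - w2‖ ∈ Ici 0 := norm_nonneg _
  have hs : s ∈ Ici 0 := add_nonneg (norm_nonneg _) (norm_nonneg _)
  have hxs : ‖x1 - x2‖ ≤ s := le_add_of_nonneg_right hw
  have hws : ‖w1 - w2‖ ≤ s := le_add_of_nonneg_left hx
  have hhs : ‖h x1 - h x2‖ ≤ αh s := (hKcont x1 x2).trans (hαh.monotoneOn hx hs hxs)
  have hβs := hβ1.nonneg hs
  have hγ1s := hγ1.nonneg hs
  have hγ2s := hγ2.nonneg (hαh.nonneg hs)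
  calc ‖f x1 w1 - f x2 w2‖
      ≤ max (β ‖x1 - x2‖ 1) (max (γ1 ‖w1 - w2‖) (γ2 ‖h x1 - h x2‖)) :=
        hiIOSS.norm_sub_le x1 x2 w1 w2
    _ ≤ max (β s 1) (max (γ1 s) (γ2 (αh s))) :=
        max_le_max (hβ1.monotoneOn hx hs hxs) <| max_le_max (hγ1.monotoneOn hw hs hws)
          (hγ2.monotoneOn (norm_nonneg _) (hαh.nonneg hs) hhs)
    _ ≤ β s 1 + γ1 s + γ2 (αh s) :=
        max_le (by linarith) (max_le (by linarith) (by linarith))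
end
end

section
/- Intermediate bound in the proof of Theorem 2 (equation (30) of the paper): Suppose the system satisfies the sample-based i-IOSS bound with respect to a sampling set K with functions β̄ ∈ 𝒦ℒ and γ̄₁, γ̄₂ ∈ 𝒦. Let x₀₁, x₀₂ be initial conditions, w₁, w₂ input sequences, and T ∈ ℕ such that there exists t_ψ ≤ T with |Δx(t_ψ)| > β̄(|Δx₀|, t_ψ). Then for all t ≥ T and every K_i ∈ K: |Δx(t)| ≤ γ̄₁(sup_{0≤τ<t} |Δw(τ)|) ⊕ γ̄₂(sup_{τ∈K_i, τ<t} |Δh(Δx(τ))|). -/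
open Set Filter

noncomputable section

theorem le_of_le_max_of_lt_of_le {x b M : ℕ → ℝ} (hb : Antitone b) (hM : Monotone M)
    (hx : ∀ t, x t ≤ max (b t) (M t)) {s t : ℕ} (hs : b s < x s) (hst : s ≤ t) :
    x t ≤ M t := by
  have hxs : x s ≤ M s := by
    rcases le_total (b s) (M s) with hbM | hMb
    · exact (hx s).trans (max_eq_right hbM).le
    · exact absurd ((hx s).trans (max_eq_left hMb).le) hs.not_ge
  have hbt : b t ≤ M t := calc
    b t ≤ b s := hb hst
    _ ≤ x s := hs.le
    _ ≤ M s := hxs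
    _ ≤ M t := hM hst
  exact (hx t).trans (max_le hbt le_rfl)

theorem sSup_image_mono_of_nonneg {g : ℕ → ℝ} (hg : ∀ τ, 0 ≤ g τ) {A B : Set ℕ}
    (hAB : A ⊆ B) (hB : B.Finite) : sSup (g '' A) ≤ sSup (g '' B) :=
  Real.sSup_le (fun _ hy => le_csSup (hB.image g).bddAbove (Set.image_mono hAB hy))
    (Real.sSup_nonneg (by rintro _ ⟨τ, _, rfl⟩; exact hg τ))

section

variable {g : ℕ → ℝ}

theorem supLt_nonneg (hg : ∀ τ, 0 ≤ g τ) (t : ℕ) : 0 ≤ supLt t g :=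
  Real.sSup_nonneg (by rintro _ ⟨τ, _, rfl⟩; exact hg τ)

theorem supMem_nonneg (hg : ∀ τ, 0 ≤ g τ) (S : Set ℕ) (t : ℕ) : 0 ≤ supMem S t g :=
  Real.sSup_nonneg (by rintro _ ⟨τ, _, rfl⟩; exact hg τ)

theorem monotone_supLt (hg : ∀ τ, 0 ≤ g τ) : Monotone (supLt · g) := fun _ b hab =>
  sSup_image_mono_of_nonneg hg (fun _ hτ => lt_of_lt_of_le hτ hab) (Set.finite_Iio b)

theorem monotone_supMem (hg : ∀ τ, 0 ≤ g τ) (S : Set ℕ) : Monotone (supMem S · g) :=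
  fun _ b hab => sSup_image_mono_of_nonneg hg (fun _ ⟨hS, hτ⟩ => ⟨hS, hτ.trans_le hab⟩)
    ((Set.finite_Iio b).subset fun _ hτ => hτ.2)

end

theorem IsClassK.comp_monotone {γ : ℝ → ℝ} (hγ : IsClassK γ) {u : ℕ → ℝ} (hu : Monotone u)
    (hu0 : ∀ t, 0 ≤ u t) : Monotone (fun t => γ (u t)) := fun _ _ hab =>
  hγ.2.1.monotoneOn (hu0 _) (hu0 _) (hu hab)

theorem IsClassKL.antitone {β : ℝ → ℕ → ℝ} (hβ : IsClassKL β) {s : ℝ} (hs : 0 ≤ s) :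
    Antitone (β s) :=
  (hβ.2 s hs).2.1

theorem intermediate_bound_eq30_general {n q p : ℕ}
    (f : Vec n → Vec q → Vec n) (h : Vec n → Vec p)
    (δ : ℕ → ℕ)
    (βb : ℝ → ℕ → ℝ) (γb1 γb2 : ℝ → ℝ)
    (hβb : IsClassKL βb) (hγb1 : IsClassK γb1) (hγb2 : IsClassK γb2)
    (hsb : sampledIOSSBound f h δ βb γb1 γb2)
    (x01 x02 : Vec n) (w1 w2 : ℕ → Vec q) (T : ℕ)
    (hviol : ∃ tψ ≤ T, βb ‖x01 - x02‖ tψ < nDx f x01 x02 w1 w2 tψ) :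
    ∀ t, T ≤ t → ∀ i, 1 ≤ i →
      nDx f x01 x02 w1 w2 t ≤
        max (γb1 (supLt t (nDw w1 w2)))
            (γb2 (supMem (sampSet δ i) t (nDy f h x01 x02 w1 w2))) := by
  obtain ⟨tψ, htψT, hexceeds⟩ := hviol
  intro t ht i hi
  have hwnn : ∀ τ, 0 ≤ nDw w1 w2 τ := fun τ => norm_nonneg _
  have hynn : ∀ τ, 0 ≤ nDy f h x01 x02 w1 w2 τ := fun τ => norm_nonneg _
  have hγ_mono : Monotone fun s => max (γb1 (supLt s (nDw w1 w2)))
      (γb2 (supMem (sampSet δ i) s (nDy f h x01 x02 w1 w2))) :=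
    (hγb1.comp_monotone (monotone_supLt hwnn) (supLt_nonneg hwnn)).max
      (hγb2.comp_monotone (monotone_supMem hynn _) (supMem_nonneg hynn _))
  exact le_of_le_max_of_lt_of_le (hβb.antitone (norm_nonneg _)) hγ_mono
    (hsb i hi x01 x02 w1 w2) hexceeds (htψT.trans ht)

/-- Intermediate bound in the proof of Theorem 2 (equation (30) of the paper). -/
theorem intermediate_bound_eq30 {n q p : ℕ}
    (f : Vec n → Vec q → Vec n) (h : Vec n → Vec p)
    (δ : ℕ → ℕ) (δmax : ℕ) (hδ : ∀ i, 1 ≤ i → δ i ≤ δmax)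
    (βb : ℝ → ℕ → ℝ) (γb1 γb2 : ℝ → ℝ)
    (hβb : IsClassKL βb) (hγb1 : IsClassK γb1) (hγb2 : IsClassK γb2)
    (hsb : sampledIOSSBound f h δ βb γb1 γb2)
    (x01 x02 : Vec n) (w1 w2 : ℕ → Vec q) (T : ℕ)
    (hviol : ∃ tψ ≤ T, βb ‖x01 - x02‖ tψ < nDx f x01 x02 w1 w2 tψ) :
    ∀ t, T ≤ t → ∀ i, 1 ≤ i →
      nDx f x01 x02 w1 w2 t ≤
        max (γb1 (supLt t (nDw w1 w2)))
            (γb2 (supMem (sampSet δ i) t (nDy f h x01 x02 w1 w2))) :=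
  intermediate_bound_eq30_general f h δ βb γb1 γb2 hβb hγb1 hγb2 hsb x01 x02 w1 w2 T hviol
end
end
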